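/- Let Γ be an alphabet, M a monoid, f : Γ → M a map, g : ℕ → ℕ strictly increasing, y₁, y₂ : ℕ → Γ ω-words, and e ∈ M. Suppose g is an (f,e)-homogeneous factorisation of both y₁ and y₂. Then for every set S ⊆ ℕ, the sequence g is an (f,e)-homogeneous factorisation of the shuffle χ_S of y₁ and y₂ along g and S; moreover the prefix of χ_S below position g(0) is equal to the prefix of y₂ below g(0). -/

import Mathlib

/-- The product `f(α[m,n)) = f (α m) * f (α (m+1)) * ⋯ * f (α (n-1))` in a monoid. -/
def blockProd {A M : Type*} [Monoid M] (f : A → M) (α : ℕ → A) (m n : ℕ) : M :=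
  ((List.range' m (n - m)).map fun i => f (α i)).prod

/-- A strictly increasing sequence `g` is an `(f,e)`-homogeneous factorisation of `α`
if `f(α[g n, g (n+1))) = e` for all `n`. -/
def Homog {A M : Type*} [Monoid M] (f : A → M) (e : M) (g : ℕ → ℕ) (α : ℕ → A) : Prop :=
  ∀ n : ℕ, blockProd f α (g n) (g (n + 1)) = e

open Classical in
/-- The shuffle `χ_S` of `y₁` and `y₂` along `g` and `S`: it equals `y₂` below `g 0`,
and on the block `[g n, g (n+1))` it equals `y₂` if `n ∈ S` and `y₁` otherwise. -/
noncomputable def shuffle {A : Type*} (y₁ y₂ : ℕ → A) (g : ℕ → ℕ) (S : Set ℕ) : ℕ → A :=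
  fun i =>
    if i < g 0 then y₂ i
    else if Nat.findGreatest (fun n => g n ≤ i) i ∈ S then y₂ i else y₁ i

theorem blockProd_congr {A M : Type*} [Monoid M] (f : A → M) {α β : ℕ → A} {m n : ℕ}
    (h : ∀ i ∈ Set.Ico m n, α i = β i) :
    blockProd f α m n = blockProd f β m n := by
  unfold blockProd
  congr 1
  refine List.map_congr_left fun i hi => ?_
  rw [List.mem_range'_1] at hi
  rw [h i ⟨hi.1, by omega⟩]

theorem StrictMono.findGreatest_le_eq_of_mem_Ico {g : ℕ → ℕ} (hg : StrictMono g) {n i : ℕ}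
    (hi : i ∈ Set.Ico (g n) (g (n + 1))) :
    Nat.findGreatest (fun k => g k ≤ i) i = n := by
  exact Nat.findGreatest_eq_iff.2 ⟨hg.le_apply.trans hi.1, fun _ => hi.1, fun k hnk _ hk =>
    (hi.2.trans_le (hg.monotone hnk)).not_ge hk⟩

section Shuffle

open Classical

variable {A : Type*} (y₁ y₂ : ℕ → A) {g : ℕ → ℕ} (S : Set ℕ)

theorem shuffle_apply_of_lt {i : ℕ} (hi : i < g 0) : shuffle y₁ y₂ g S i = y₂ i := by
  simp only [shuffle, if_pos hi]

theorem shuffle_apply_of_mem_Ico (hg : StrictMono g) {n i : ℕ} (hi : i ∈ Set.Ico (g n) (g (n + 1))) :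
    shuffle y₁ y₂ g S i = if n ∈ S then y₂ i else y₁ i := by
  have hi0 : ¬ i < g 0 := not_lt.2 ((hg.monotone n.zero_le).trans hi.1)
  simp only [shuffle, if_neg hi0, hg.findGreatest_le_eq_of_mem_Ico hi]

theorem Homog.shuffle {M : Type*} [Monoid M] {f : A → M} {e : M} (hg : StrictMono g)
    (h₁ : Homog f e g y₁) (h₂ : Homog f e g y₂) : Homog f e g (shuffle y₁ y₂ g S) := by
  intro n
  by_cases hn : n ∈ S
  · rw [← h₂ n]
    exact blockProd_congr f fun i hi => by rw [shuffle_apply_of_mem_Ico y₁ y₂ S hg hi, if_pos hn]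
  · rw [← h₁ n]
    exact blockProd_congr f fun i hi => by rw [shuffle_apply_of_mem_Ico y₁ y₂ S hg hi, if_neg hn]

end Shuffle

/-- if `g` is an `(f,e)`-homogeneous factorisation of both `y₁` and `y₂`,
then it is an `(f,e)`-homogeneous factorisation of every shuffle `χ_S`, and `χ_S`
agrees with `y₂` below position `g 0`. -/
theorem stmt9 {A M : Type*} [Monoid M] (f : A → M) (g : ℕ → ℕ) (hg : StrictMono g)
    (y₁ y₂ : ℕ → A) (e : M)
    (h₁ : Homog f e g y₁) (h₂ : Homog f e g y₂) :
    ∀ S : Set ℕ,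
      Homog f e g (shuffle y₁ y₂ g S) ∧
      ∀ i : ℕ, i < g 0 → shuffle y₁ y₂ g S i = y₂ i :=
  fun S => ⟨h₁.shuffle y₁ y₂ S hg h₂, fun _ => shuffle_apply_of_lt y₁ y₂ S⟩
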